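/- Let p be an odd prime, and let V = (C_p × C_p) ⋊ C_2 be the generalized dihedral group of order 2p^2. The holomorph Hol(V) contains a subgroup F₁ that is isomorphic to ZMod p × ZMod (2p), acts regularly on V, and whose normalizer in Equiv.Perm V is contained in Hol(V). -/

import Mathlib

/-- The holomorph of a group `X`: the normalizer in `Equiv.Perm X` of the image of the
left regular representation of `X`. -/
def Hol (X : Type*) [Group X] : Subgroup (Equiv.Perm X) :=
  Subgroup.normalizer ((MulAction.toPermHom X X).range : Set (Equiv.Perm X))

/-- A subgroup `S` of `Equiv.Perm X` acts regularly on `X`: the action is transitive and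
the stabilizer of every point is trivial. -/
def IsRegularSubgroup {X : Type*} (S : Subgroup (Equiv.Perm X)) : Prop :=
  (∀ x y : X, ∃ s ∈ S, s x = y) ∧ ∀ s ∈ S, ∀ x : X, s x = x → s = 1

/-- The inversion automorphism of `C_p × C_p` (written multiplicatively). -/
def invAut (p : ℕ) : MulAut (Multiplicative (ZMod p × ZMod p)) :=
  MulEquiv.inv (Multiplicative (ZMod p × ZMod p))

/-- The action of `C_2` on `C_p × C_p` by inversion. -/
def invHom (p : ℕ) : Multiplicative (ZMod 2) →* MulAut (Multiplicative (ZMod p × ZMod p)) where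
  toFun g := invAut p ^ (Multiplicative.toAdd g).val
  map_one' := by simp
  map_mul' g h := by
    have h2 : invAut p ^ 2 = 1 := by
      ext x : 1
      simp [invAut, sq]
    show invAut p ^ (Multiplicative.toAdd (g * h)).val = _
    rw [toAdd_mul, ZMod.val_add, ← pow_add]
    exact (pow_eq_pow_mod _ h2).symm

/-- The generalized dihedral group `(C_p × C_p) ⋊ C_2`: the semidirect product of
`C_p × C_p` (written multiplicatively) by the group of order 2 acting by inversion. -/
abbrev GenDihedral (p : ℕ) : Type :=
  SemidirectProduct (Multiplicative (ZMod p × ZMod p)) (Multiplicative (ZMod 2)) (invHom p)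

/-!
`N × K` acts regularly on `N ⋊ K` by `(n, k) • x = n * x * k⁻¹`, i.e. through left
multiplications by `N` and right multiplications by `K`; both normalise the left regular
representation. For `V = (C_p × C_p) ⋊ C₂` this gives a regular subgroup
`F ≅ C_p² × C₂ ≅ C_p × C_{2p}` of `Hol V`.

An element of the normaliser of a regular subgroup is an element of it times a
permutation fixing `1`, and such a permutation acts on the orbit of `1` through an
automorphism `α` of `C_p² × C₂`. As `p` is odd, `α` preserves `C_p²` and fixes the
involution, so the permutation is `(a, r) ↦ (β a, r)` for an endomorphism `β` of `C_p²`.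
Since `β` commutes with inversion, this is an automorphism of `V`, hence lies in `Hol V`.
-/

open Function

theorem Subgroup.le_normalizer_of_conj_mem {G : Type*} [Group G] {H K : Subgroup G}
    (h : ∀ k ∈ K, ∀ g ∈ H, k * g * k⁻¹ ∈ H) : K ≤ normalizer (H : Set G) := by
  intro k hk
  refine Subgroup.mem_normalizer_iff.mpr fun g => ⟨h k hk g, fun hg => ?_⟩
  simpa [mul_assoc] using h k⁻¹ (inv_mem hk) _ hg

section Holomorph

variable {X : Type*} [Group X]

theorem mulLeft_mem_Hol (v : X) : MulAction.toPermHom X X v ∈ Hol X :=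
  Subgroup.le_normalizer ⟨v, rfl⟩

theorem mulRight_mem_Hol (g : X) : Equiv.mulRight g ∈ Hol X := by
  refine Subgroup.centralizer_le_normalizer _ ?_
  rintro _ ⟨v, rfl⟩
  ext x
  simp [mul_assoc]

theorem range_toPerm_le_Hol : (MulAut.toPerm X).range ≤ Hol X := by
  refine Subgroup.le_normalizer_of_conj_mem ?_
  rintro _ ⟨f, rfl⟩ _ ⟨v, rfl⟩
  refine ⟨f v, Equiv.ext fun x => ?_⟩
  change f v * x = f (v * f.symm x)
  simp

theorem mem_Hol_of_map_mul (σ : Equiv.Perm X) (hσ : ∀ x y, σ (x * y) = σ x * σ y) :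
    σ ∈ Hol X :=
  range_toPerm_le_Hol ⟨{ σ with map_mul' := hσ }, rfl⟩

end Holomorph

namespace SemidirectProduct

variable {N G : Type*} [Group N] [Group G] (φ : G →* MulAut N)

def translationPerm : N × G →* Equiv.Perm (N ⋊[φ] G) where
  toFun w :=
    { toFun x := ⟨w.1 * x.left, x.right * w.2⁻¹⟩
      invFun x := ⟨w.1⁻¹ * x.left, x.right * w.2⟩
      left_inv x := by ext <;> simp
      right_inv x := by ext <;> simp }
  map_one' := by ext x <;> simp
  map_mul' w w' := by ext x <;> simp [mul_assoc]

variable {φ}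

@[simp]
theorem translationPerm_left (w : N × G) (x : N ⋊[φ] G) :
    (translationPerm φ w x).left = w.1 * x.left := rfl

@[simp]
theorem translationPerm_right (w : N × G) (x : N ⋊[φ] G) :
    (translationPerm φ w x).right = x.right * w.2⁻¹ := rfl

theorem translationPerm_apply (w : N × G) (x : N ⋊[φ] G) :
    translationPerm φ w x = inl w.1 * x * inr w.2⁻¹ := by
  ext <;> simp

theorem translationPerm_apply_one (w : N × G) : translationPerm φ w 1 = ⟨w.1, w.2⁻¹⟩ := by
  ext <;> simp

theorem injective_translationPerm_apply_one : Injective fun w => translationPerm φ w 1 := by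
  intro w w' h
  simp only [translationPerm_apply_one] at h
  exact Prod.ext (congrArg left h) (inv_injective (congrArg right h))

theorem injective_translationPerm : Injective (translationPerm φ) :=
  fun _ _ h => injective_translationPerm_apply_one (congrArg (· 1) h)

theorem range_translationPerm_le_Hol : (translationPerm φ).range ≤ Hol (N ⋊[φ] G) := by
  rintro _ ⟨w, rfl⟩
  have : translationPerm φ w =
      MulAction.toPermHom (N ⋊[φ] G) _ (inl w.1) * Equiv.mulRight (inr w.2⁻¹) := by
    ext1 x
    rw [translationPerm_apply, mul_assoc]
    rfl
  rw [this]
  exact mul_mem (mulLeft_mem_Hol _) (mulRight_mem_Hol _)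

theorem isRegularSubgroup_range_translationPerm :
    IsRegularSubgroup (translationPerm φ).range := by
  refine ⟨fun x y => ⟨_, ⟨(y.left * x.left⁻¹, y.right⁻¹ * x.right), rfl⟩, ?_⟩, ?_⟩
  · ext <;> simp
  · rintro _ ⟨w, rfl⟩ x hx
    have hl := congrArg left hx
    have hr := congrArg right hx
    simp only [translationPerm_left, translationPerm_right, mul_eq_right, mul_eq_left,
      inv_eq_one] at hl hr
    rw [show w = 1 from Prod.ext hl hr, map_one]

end SemidirectProduct

section RegularNormalizer

variable {X : Type*}

theorem IsRegularSubgroup.normalizer_le {S H : Subgroup (Equiv.Perm X)}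
    (hS : IsRegularSubgroup S) (hSH : S ≤ H) (x₀ : X)
    (hstab : ∀ π ∈ Subgroup.normalizer (S : Set (Equiv.Perm X)), π x₀ = x₀ → π ∈ H) :
    Subgroup.normalizer (S : Set (Equiv.Perm X)) ≤ H := by
  intro π hπ
  obtain ⟨s, hs, hsx₀⟩ := hS.1 x₀ (π x₀)
  have hfix : (s⁻¹ * π) x₀ = x₀ := by
    rw [Equiv.Perm.mul_apply, Equiv.Perm.inv_eq_iff_eq, hsx₀]
  have hmem : s⁻¹ * π ∈ Subgroup.normalizer (S : Set (Equiv.Perm X)) :=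
    mul_mem (inv_mem (Subgroup.le_normalizer hs)) hπ
  simpa using mul_mem (hSH hs) (hstab _ hmem hfix)

theorem exists_injective_monoidHom_of_mem_normalizer {W : Type*} [Group W]
    (ρ : W →* Equiv.Perm X) {x₀ : X} (hρ : Injective fun w => ρ w x₀)
    {π : Equiv.Perm X} (hπ : π ∈ Subgroup.normalizer (ρ.range : Set (Equiv.Perm X)))
    (hπx₀ : π x₀ = x₀) :
    ∃ α : W →* W, Injective α ∧ ∀ w, π (ρ w x₀) = ρ (α w) x₀ := by
  have hρinj : Injective ρ := fun _ _ h => hρ (congrArg (· x₀) h)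
  have hconj : ∀ w, ∃ u, ρ u = π * ρ w * π⁻¹ :=
    fun w => (Subgroup.mem_normalizer_iff.mp hπ (ρ w)).mp ⟨w, rfl⟩
  choose f hf using hconj
  let α : W →* W :=
    { toFun := f
      map_one' := hρinj (by rw [hf, map_one, mul_one, mul_inv_cancel])
      map_mul' := fun w w' => hρinj (by
        rw [map_mul, hf, hf, hf, map_mul]
        group) }
  have hαπ : ∀ w, π (ρ w x₀) = ρ (α w) x₀ := fun w => by
    change _ = ρ (f w) x₀
    rw [hf, Equiv.Perm.mul_apply, Equiv.Perm.mul_apply, Equiv.Perm.inv_eq_iff_eq.mpr hπx₀.symm]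
  refine ⟨α, fun w w' h => hρ (π.injective ?_), hαπ⟩
  simp only [hαπ, h]

end RegularNormalizer

open SemidirectProduct

theorem eq_one_of_sq_eq_one_of_pow_odd {M : Type*} [Monoid M] {p : ℕ} (hp : Odd p) {x : M}
    (h2 : x ^ 2 = 1) (hpx : x ^ p = 1) : x = 1 := by
  simpa [Nat.coprime_two_left.mpr hp] using pow_gcd_eq_one.mpr ⟨h2, hpx⟩

/-- `N × 1` consists of the elements of order dividing `p`, and the generator of `C₂` is the
only involution. -/
theorem exists_eq_prodMk_of_injective {N : Type*} [Group N] {p : ℕ} (hp : Odd p)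
    (hN : ∀ n : N, n ^ p = 1)
    (α : N × Multiplicative (ZMod 2) →* N × Multiplicative (ZMod 2))
    (hα : Injective α) : ∃ β : N →* N, ∀ n k, α (n, k) = (β n, k) := by
  have hsq : ∀ k : Multiplicative (ZMod 2), k ^ 2 = 1 := by decide
  have hC₂ : ∀ k k' : Multiplicative (ZMod 2), k ≠ 1 → k' ≠ 1 → k = k' := by decide
  have hpow : ∀ k : Multiplicative (ZMod 2), k ^ p = k := by
    obtain ⟨m, rfl⟩ := hp
    intro k
    rw [pow_succ, pow_mul, hsq, one_pow, one_mul]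
  have hsnd : ∀ n, (α (n, 1)).2 = 1 := fun n => by
    rw [← hpow (α (n, 1)).2, ← Prod.pow_snd, ← map_pow, Prod.pow_mk, hN, one_pow,
      Prod.mk_one_one, map_one, Prod.snd_one]
  have hinr : ∀ k, α (1, k) = (1, k) := fun k => by
    have h2 : α (1, k) ^ 2 = 1 := by
      rw [← map_pow, Prod.pow_mk, one_pow, hsq, Prod.mk_one_one, map_one]
    have hfst : (α (1, k)).1 = 1 :=
      eq_one_of_sq_eq_one_of_pow_odd hp (congrArg Prod.fst h2) (hN _)
    refine Prod.ext hfst ?_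
    by_cases hk : k = 1
    · rw [hk, Prod.mk_one_one, map_one]
    have hne : (α (1, k)).2 ≠ 1 := fun h => hk <| by
      simpa using hα ((Prod.ext hfst h).trans (map_one α).symm)
    exact hC₂ _ _ hne hk
  refine ⟨(MonoidHom.fst _ _).comp (α.comp (MonoidHom.inl _ _)), fun n k => ?_⟩
  calc α (n, k) = α (n, 1) * α (1, k) := by rw [← map_mul, Prod.mk_mul_mk, mul_one, one_mul]
    _ = _ := by rw [hinr]; ext <;> simp [hsnd]

theorem invHom_apply_map {p : ℕ}
    (β : Multiplicative (ZMod p × ZMod p) →* Multiplicative (ZMod p × ZMod p))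
    (r : Multiplicative (ZMod 2)) (n : Multiplicative (ZMod p × ZMod p)) :
    invHom p r (β n) = β (invHom p r n) := by
  obtain ⟨r, rfl⟩ : ∃ a : ZMod 2, Multiplicative.ofAdd a = r := ⟨r.toAdd, rfl⟩
  fin_cases r
  · rfl
  · exact (map_inv β n).symm

theorem GenDihedral.mem_Hol_of_mem_normalizer_of_apply_one {p : ℕ} (hp : Odd p)
    {π : Equiv.Perm (GenDihedral p)}
    (hπ : π ∈ Subgroup.normalizer ((translationPerm (invHom p)).range : Set _))
    (hπ1 : π 1 = 1) : π ∈ Hol (GenDihedral p) := by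
  obtain ⟨α, hαinj, hα⟩ :=
    exists_injective_monoidHom_of_mem_normalizer _ injective_translationPerm_apply_one hπ hπ1
  have hexp : ∀ n : Multiplicative (ZMod p × ZMod p), n ^ p = 1 := fun n =>
    Multiplicative.toAdd.injective <| by ext <;> simp [toAdd_pow, nsmul_eq_mul]
  obtain ⟨β, hβ⟩ := exists_eq_prodMk_of_injective hp hexp α hαinj
  let σ : GenDihedral p →* GenDihedral p :=
    map β (MonoidHom.id _) fun r => MonoidHom.ext fun n => (invHom_apply_map β r n).symm
  have hπσ : ∀ x, π x = σ x := fun x => by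
    rw [← inl_left_mul_inr_right (σ x)]
    simpa [translationPerm_apply_one, hβ, σ] using hα (x.left, x.right⁻¹)
  exact mem_Hol_of_map_mul π fun x y => by simp only [hπσ, map_mul]

def zmodProdAddEquiv {p : ℕ} (hp : Odd p) :
    (ZMod p × ZMod p) × ZMod 2 ≃+ ZMod p × ZMod (2 * p) :=
  AddEquiv.prodAssoc.trans <| (AddEquiv.refl _).prodCongr <|
    AddEquiv.prodComm.trans (ZMod.chineseRemainder (Nat.coprime_two_left.mpr hp)).symm.toAddEquiv

theorem abelian_type_regular_in_hol_genDihedral_general (p : ℕ) (hodd : Odd p) :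
    ∃ F : Subgroup (Equiv.Perm (GenDihedral p)),
      F ≤ Hol (GenDihedral p) ∧
      Nonempty (↥F ≃* Multiplicative (ZMod p × ZMod (2 * p))) ∧
      IsRegularSubgroup F ∧
      Subgroup.normalizer (F : Set (Equiv.Perm (GenDihedral p))) ≤ Hol (GenDihedral p) := by
  refine ⟨(translationPerm (invHom p)).range, range_translationPerm_le_Hol,
    ⟨(MonoidHom.ofInjective injective_translationPerm).symm.trans <|
      (MulEquiv.prodMultiplicative _ _).symm.trans (zmodProdAddEquiv hodd).toMultiplicative⟩,
    isRegularSubgroup_range_translationPerm, ?_⟩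
  exact isRegularSubgroup_range_translationPerm.normalizer_le range_translationPerm_le_Hol 1
    fun π hπ hπ1 => GenDihedral.mem_Hol_of_mem_normalizer_of_apply_one hodd hπ hπ1

/-- The holomorph of the generalized dihedral group `V = (C_p × C_p) ⋊ C_2` of order
`2 p ^ 2` (`p` an odd prime) contains a subgroup isomorphic to `C_p × C_{2p}` acting
regularly on `V`, whose normalizer in `Equiv.Perm V` is contained in the holomorph. -/
theorem abelian_type_regular_in_hol_genDihedral (p : ℕ) (hp : p.Prime) (hodd : Odd p) :
    ∃ F : Subgroup (Equiv.Perm (GenDihedral p)),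
      F ≤ Hol (GenDihedral p) ∧
      Nonempty (↥F ≃* Multiplicative (ZMod p × ZMod (2 * p))) ∧
      IsRegularSubgroup F ∧
      Subgroup.normalizer (F : Set (Equiv.Perm (GenDihedral p))) ≤ Hol (GenDihedral p) :=
  abelian_type_regular_in_hol_genDihedral_general p hodd
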